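/- arXiv:2007.01086 — 2 statements merged into one kernel-verified Lean document; each statement's English description precedes it below -/
import Mathlib

section
/- Fix k ≥ 2 and a nonempty T ⊆ 𝕋(k). Let y, z : T → Bool satisfy D_T(y) = D_T(z), and suppose #{t ∈ T : z t = true} ≤ #{t ∈ T : y t = true}; set w := #{t ∈ T : y t = true} − #{t ∈ T : z t = true} ∈ ℕ. Then: (i) for every ℓ ∈ ℕ with ℓ₀(k) ≤ ℓ and ℓ + w ≤ 2^k − 2, |F_y(k, ℓ+w)| = |F_z(k, ℓ)|; (ii) for every ℓ ∈ ℕ with ℓ < ℓ₀(k) ≤ ℓ + w, F_y(k, ℓ+w) = ∅; (iii) for every ℓ ∈ ℕ with ℓ ≤ 2^k − 2 < ℓ + w, F_z(k, ℓ) = ∅. -/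
/-- `𝕋(k)`: all non-constant index vectors `t : Fin k → Bool`. -/
def TT (k : ℕ) : Finset (Fin k → Bool) :=
  Finset.univ.filter fun t => (∃ i, t i = true) ∧ (∃ i, t i = false)

/-- A `(k,ℓ)`-labeling. -/
def IsLabeling (k ℓ : ℕ) (x : ↥(TT k) → Bool) : Prop :=
  (∀ i j : Fin k, i ≠ j →
      ∃ t : ↥(TT k), t.1 i = true ∧ t.1 j = false ∧ x t = true) ∧
  (Finset.univ.filter fun t : ↥(TT k) => x t = true).card = ℓ

/-- `F(k,ℓ)`: the type of all `(k,ℓ)`-labelings. -/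
def FF (k ℓ : ℕ) := {x : ↥(TT k) → Bool // IsLabeling k ℓ x}

/-- `F_y(k,ℓ)`: the `(k,ℓ)`-labelings agreeing with `y : T → Bool` on `T`. -/
def Fy (k ℓ : ℕ) (T : Finset (Fin k → Bool)) (hT : T ⊆ TT k) (y : ↥T → Bool) :
    Set (FF k ℓ) :=
  {x | ∀ t : ↥T, x.1 ⟨t.1, hT t.2⟩ = y t}

/-- The impact set `𝒟_T(y)` of `y : T → Bool`. -/
def impactSet (k : ℕ) (T : Finset (Fin k → Bool)) (y : ↥T → Bool) :
    Set (Fin k × Fin k) :=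
  {p | ∃ t : ↥T, t.1 p.1 = true ∧ t.1 p.2 = false ∧ y t = true}

/-- `ℓ₀(k)`: the minimal cardinality of a subset `T' ⊆ 𝕋(k)` such that for all
`i ≠ j` there is `t ∈ T'` with `t i = c` and `t j = e`. -/
noncomputable def ell0 (k : ℕ) : ℕ :=
  sInf {m : ℕ | ∃ T' : Finset (Fin k → Bool), T' ⊆ TT k ∧
    (∀ i j : Fin k, i ≠ j → ∃ t ∈ T', t i = true ∧ t j = false) ∧ T'.card = m}

/-!
Overwriting the values of a labeling on `T` by `z` instead of `y` changes its number of
`true` labels by exactly `#z - #y`, and it preserves condition (a): a pair `(i, j)` separated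
inside `T` by a `true` label of `y` lies in `D_T(y) = D_T(z)`, so it is also separated inside `T`
by a `true` label of `z`. Overwriting back undoes this, so it is a bijection
`F_y(k, ℓ + w) ≃ F_z(k, ℓ)` for every `ℓ`. Parts (ii) and (iii) follow because every
`(k, m)`-labeling has `ℓ₀(k) ≤ m ≤ |𝕋(k)| = 2^k - 2`.
-/

open Finset

section Replace

variable {k : ℕ}

def replaceOn (T : Finset (Fin k → Bool)) (u : ↥T → Bool) (x : ↥(TT k) → Bool) :
    ↥(TT k) → Bool :=
  fun t => if h : t.1 ∈ T then u ⟨t.1, h⟩ else x t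

def IsSeparating (x : ↥(TT k) → Bool) : Prop :=
  ∀ i j : Fin k, i ≠ j → ∃ t : ↥(TT k), t.1 i = true ∧ t.1 j = false ∧ x t = true

variable {T : Finset (Fin k → Bool)} {u v : ↥T → Bool} {x : ↥(TT k) → Bool}

theorem replaceOn_apply_of_mem (hT : T ⊆ TT k) (u : ↥T → Bool) (x : ↥(TT k) → Bool)
    (t : ↥T) : replaceOn T u x ⟨t.1, hT t.2⟩ = u t := by
  simp [replaceOn, t.2]

theorem replaceOn_apply_of_not_mem (u : ↥T → Bool) (x : ↥(TT k) → Bool) {t : ↥(TT k)}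
    (ht : t.1 ∉ T) : replaceOn T u x t = x t := by
  simp [replaceOn, ht]

theorem replaceOn_replaceOn (u v : ↥T → Bool) (x : ↥(TT k) → Bool) :
    replaceOn T u (replaceOn T v x) = replaceOn T u x := by
  funext t
  by_cases ht : t.1 ∈ T <;> simp [replaceOn, ht]

theorem replaceOn_eq_self (hT : T ⊆ TT k) (hxu : ∀ t : ↥T, x ⟨t.1, hT t.2⟩ = u t) :
    replaceOn T u x = x := by
  funext t
  by_cases ht : t.1 ∈ T
  · simp [replaceOn, ht, ← hxu]
  · exact replaceOn_apply_of_not_mem u x ht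

theorem card_filter_true_and_mem (hT : T ⊆ TT k) (hxu : ∀ t : ↥T, x ⟨t.1, hT t.2⟩ = u t) :
    #{t | x t = true ∧ t.1 ∈ T} = #{t | u t = true} := by
  symm
  refine card_nbij (fun t => ⟨t.1, hT t.2⟩) ?_ ?_ ?_
  · intro t ht
    simp_all
  · intro s _ t _ hst
    exact Subtype.ext (congrArg Subtype.val hst :)
  · intro t ht
    simp only [mem_coe, mem_filter, mem_univ, true_and] at ht
    refine ⟨⟨t.1, ht.2⟩, ?_, rfl⟩
    simpa [← hxu ⟨t.1, ht.2⟩] using ht.1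

theorem card_filter_true_eq (hT : T ⊆ TT k) (hxu : ∀ t : ↥T, x ⟨t.1, hT t.2⟩ = u t) :
    #{t | x t = true} = #{t | u t = true} + #{t | x t = true ∧ t.1 ∉ T} := by
  rw [← card_filter_true_and_mem hT hxu, ← filter_filter, ← filter_filter,
    card_filter_add_card_filter_not]

theorem card_filter_replaceOn_true_and_not_mem (u : ↥T → Bool) (x : ↥(TT k) → Bool) :
    #{t | replaceOn T u x t = true ∧ t.1 ∉ T} = #{t | x t = true ∧ t.1 ∉ T} := by
  congr 1
  ext t
  by_cases ht : t.1 ∈ T <;> simp [ht, replaceOn_apply_of_not_mem]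

theorem card_replaceOn_add (hT : T ⊆ TT k) (hxu : ∀ t : ↥T, x ⟨t.1, hT t.2⟩ = u t) :
    #{t | replaceOn T v x t = true} + #{t | u t = true}
      = #{t | x t = true} + #{t | v t = true} := by
  rw [card_filter_true_eq hT hxu,
    card_filter_true_eq hT (replaceOn_apply_of_mem hT v x), card_filter_replaceOn_true_and_not_mem]
  ring

theorem IsSeparating.replaceOn (hT : T ⊆ TT k) (hsub : impactSet k T u ⊆ impactSet k T v)
    (hxu : ∀ t : ↥T, x ⟨t.1, hT t.2⟩ = u t) (hx : IsSeparating x) :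
    IsSeparating (replaceOn T v x) := by
  intro i j hij
  obtain ⟨t, hti, htj, hxt⟩ := hx i j hij
  by_cases htT : t.1 ∈ T
  · have hu : u ⟨t.1, htT⟩ = true := by rw [← hxu]; exact hxt
    obtain ⟨s, hsi, hsj, hvs⟩ :=
      hsub (show (i, j) ∈ impactSet k T u from ⟨⟨t.1, htT⟩, hti, htj, hu⟩)
    exact ⟨⟨s.1, hT s.2⟩, hsi, hsj, by rw [replaceOn_apply_of_mem hT]; exact hvs⟩
  · exact ⟨t, hti, htj, by rw [replaceOn_apply_of_not_mem v x htT]; exact hxt⟩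

end Replace

section Labelings

variable {k m m' : ℕ} {T : Finset (Fin k → Bool)} {u v : ↥T → Bool}

def Fy.replace (hT : T ⊆ TT k) (hsub : impactSet k T u ⊆ impactSet k T v)
    (hm : m + #{t | v t = true} = m' + #{t | u t = true}) (x : Fy k m T hT u) :
    Fy k m' T hT v :=
  ⟨⟨replaceOn T v x.1.1, IsSeparating.replaceOn hT hsub x.2 x.1.2.1, by
    have := card_replaceOn_add (v := v) hT x.2
    rw [x.1.2.2] at this
    omega⟩, replaceOn_apply_of_mem hT v x.1.1⟩

def Fy.replaceEquiv (hT : T ⊆ TT k) (hD : impactSet k T u = impactSet k T v)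
    (hm : m + #{t | v t = true} = m' + #{t | u t = true}) :
    Fy k m T hT u ≃ Fy k m' T hT v where
  toFun := Fy.replace hT hD.subset hm
  invFun := Fy.replace hT hD.symm.subset hm.symm
  left_inv x := Subtype.ext <| Subtype.ext <| by
    simp only [Fy.replace, replaceOn_replaceOn, replaceOn_eq_self hT x.2]
  right_inv x := Subtype.ext <| Subtype.ext <| by
    simp only [Fy.replace, replaceOn_replaceOn, replaceOn_eq_self hT x.2]

theorem FF.ell0_le (x : FF k m) : ell0 k ≤ m := by
  rw [← x.2.2, ← card_map (Function.Embedding.subtype _)]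
  refine Nat.sInf_le ⟨_, ?_, ?_, rfl⟩
  · intro s hs
    obtain ⟨t, -, rfl⟩ := mem_map.mp hs
    exact t.2
  · intro i j hij
    obtain ⟨t, hti, htj, hxt⟩ := x.2.1 i j hij
    exact ⟨t.1, mem_map_of_mem _ (by simpa using hxt), hti, htj⟩

theorem FF.le_card_TT (x : FF k m) : m ≤ #(TT k) := by
  rw [← x.2.2]
  exact (card_filter_le _ _).trans_eq (by simp)

theorem card_TT (hk : k ≠ 0) : #(TT k) = 2 ^ k - 2 := by
  have hne : (fun _ => false : Fin k → Bool) ≠ fun _ => true := by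
    simpa [Function.ne_iff] using ⟨(⟨0, Nat.pos_of_ne_zero hk⟩ : Fin k)⟩
  have hTT : TT k = (univ.erase fun _ => true).erase fun _ => false := by
    ext t
    simp [TT, Function.ne_iff, and_comm]
  rw [hTT, card_erase_of_mem (by simpa using hne), card_erase_of_mem (mem_univ _),
    card_univ, Fintype.card_fun, Fintype.card_bool, Fintype.card_fin]
  omega

end Labelings

theorem impact_set_shift_general (k : ℕ) (hk : 2 ≤ k) (T : Finset (Fin k → Bool))
    (hT : T ⊆ TT k) (y z : ↥T → Bool)
    (hD : impactSet k T y = impactSet k T z)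
    (hw : (Finset.univ.filter fun t : ↥T => z t = true).card ≤
          (Finset.univ.filter fun t : ↥T => y t = true).card) :
    (∀ ℓ : ℕ, ell0 k ≤ ℓ →
      ℓ + ((Finset.univ.filter fun t : ↥T => y t = true).card
            - (Finset.univ.filter fun t : ↥T => z t = true).card) ≤ 2 ^ k - 2 →
      Nat.card ↥(Fy k (ℓ + ((Finset.univ.filter fun t : ↥T => y t = true).card
            - (Finset.univ.filter fun t : ↥T => z t = true).card)) T hT y) =
        Nat.card ↥(Fy k ℓ T hT z)) ∧
    (∀ ℓ : ℕ, ℓ < ell0 k →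
      ell0 k ≤ ℓ + ((Finset.univ.filter fun t : ↥T => y t = true).card
            - (Finset.univ.filter fun t : ↥T => z t = true).card) →
      Fy k (ℓ + ((Finset.univ.filter fun t : ↥T => y t = true).card
            - (Finset.univ.filter fun t : ↥T => z t = true).card)) T hT y = ∅) ∧
    (∀ ℓ : ℕ, ℓ ≤ 2 ^ k - 2 →
      2 ^ k - 2 < ℓ + ((Finset.univ.filter fun t : ↥T => y t = true).card
            - (Finset.univ.filter fun t : ↥T => z t = true).card) →
      Fy k ℓ T hT z = ∅) := by
  have hcard : #(TT k) = 2 ^ k - 2 := card_TT (by omega)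
  refine ⟨fun ℓ _ _ => Nat.card_congr (Fy.replaceEquiv hT hD (by omega)),
    fun ℓ hℓ _ => ?_, fun ℓ _ hℓ => ?_⟩
  · refine Set.eq_empty_of_forall_notMem fun x hx => ?_
    have := FF.ell0_le (Fy.replace hT hD.subset (m' := ℓ) (by omega) ⟨x, hx⟩).1
    omega
  · refine Set.eq_empty_of_forall_notMem fun x hx => ?_
    have := FF.le_card_TT
      (Fy.replace hT hD.symm.subset (m' := ℓ + (#{t | y t = true} - #{t | z t = true}))
        (by omega) ⟨x, hx⟩).1
    omega

/-- If `y, z : T → Bool` have equal impact sets and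
`w = #{t : y t} − #{t : z t} ≥ 0`, then (i) `|F_y(k,ℓ+w)| = |F_z(k,ℓ)|` for
`ℓ₀(k) ≤ ℓ` with `ℓ+w ≤ 2^k−2`; (ii) `F_y(k,ℓ+w) = ∅` when `ℓ < ℓ₀(k) ≤ ℓ+w`;
(iii) `F_z(k,ℓ) = ∅` when `ℓ ≤ 2^k−2 < ℓ+w`. -/
theorem impact_set_shift (k : ℕ) (hk : 2 ≤ k) (T : Finset (Fin k → Bool))
    (hT : T ⊆ TT k) (hTne : T.Nonempty) (y z : ↥T → Bool)
    (hD : impactSet k T y = impactSet k T z)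
    (hw : (Finset.univ.filter fun t : ↥T => z t = true).card ≤
          (Finset.univ.filter fun t : ↥T => y t = true).card) :
    (∀ ℓ : ℕ, ell0 k ≤ ℓ →
      ℓ + ((Finset.univ.filter fun t : ↥T => y t = true).card
            - (Finset.univ.filter fun t : ↥T => z t = true).card) ≤ 2 ^ k - 2 →
      Nat.card ↥(Fy k (ℓ + ((Finset.univ.filter fun t : ↥T => y t = true).card
            - (Finset.univ.filter fun t : ↥T => z t = true).card)) T hT y) =
        Nat.card ↥(Fy k ℓ T hT z)) ∧
    (∀ ℓ : ℕ, ℓ < ell0 k →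
      ell0 k ≤ ℓ + ((Finset.univ.filter fun t : ↥T => y t = true).card
            - (Finset.univ.filter fun t : ↥T => z t = true).card) →
      Fy k (ℓ + ((Finset.univ.filter fun t : ↥T => y t = true).card
            - (Finset.univ.filter fun t : ↥T => z t = true).card)) T hT y = ∅) ∧
    (∀ ℓ : ℕ, ℓ ≤ 2 ^ k - 2 →
      2 ^ k - 2 < ℓ + ((Finset.univ.filter fun t : ↥T => y t = true).card
            - (Finset.univ.filter fun t : ↥T => z t = true).card) →
      Fy k ℓ T hT z = ∅) :=
  impact_set_shift_general k hk T hT y z hD hw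
end

section
/- Let n ≥ 1, k ≥ 1, and let P : Fin k → Finset (Fin n) be a constructive ordered k-cover of Fin n. Call a subset C of Fin n an intersector of P if there exists a function f : Fin k → Fin n with f i ∈ P i for all i whose image is exactly C. Let 𝒞 be the collection of minimal intersectors, i.e. intersectors C such that no intersector C' ≠ C satisfies C' ⊆ C. Then 𝒞 forms a constructive unordered cover of Fin n: the union of the members of 𝒞 equals Fin n, and for any two distinct C, C' ∈ 𝒞 the difference C \ C' is nonempty. -/
/-!
Every minimal transversal, i.e. inclusion-minimal set meeting every `P i`, is a minimal
intersector: each element of a minimal transversal `T` is its only point in some `P i`, so choosing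
a point of each `T ∩ P i` hits all of `T`. Given `p ∈ P i₀`, the cover condition lets us pick in every
other `P j` a point outside `P i₀`; together with `p` these form a transversal meeting `P i₀` only in
`p`, and any minimal transversal inside it must contain `p`.
-/

/-- A constructive ordered `k`-cover of `Fin n`. -/
def IsCCover (n k : ℕ) (P : Fin k → Finset (Fin n)) : Prop :=
  Finset.univ.biUnion P = Finset.univ ∧ ∀ i j : Fin k, i ≠ j → (P i \ P j).Nonempty

/-- `C` is an intersector of `P`: there is `f : Fin k → Fin n` choosing an element
of each `P i`, whose image is exactly `C`. -/
def IsIntersector (n k : ℕ) (P : Fin k → Finset (Fin n)) (C : Finset (Fin n)) : Prop :=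
  ∃ f : Fin k → Fin n, (∀ i, f i ∈ P i) ∧ Finset.univ.image f = C

/-- `C` is a minimal intersector of `P`: an intersector such that no intersector
`C' ≠ C` satisfies `C' ⊆ C`. -/
def IsMinIntersector (n k : ℕ) (P : Fin k → Finset (Fin n)) (C : Finset (Fin n)) : Prop :=
  IsIntersector n k P C ∧ ∀ C', IsIntersector n k P C' → C' ⊆ C → C' = C

open Finset

section Transversal

variable {ι α : Type*} [DecidableEq α] {P : ι → Finset α} {T : Finset α}

def IsTransversal (P : ι → Finset α) (T : Finset α) : Prop :=
  ∀ i, (T ∩ P i).Nonempty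

lemma Minimal.exists_inter_subset_singleton (hT : Minimal (IsTransversal P) T) {t : α}
    (ht : t ∈ T) : ∃ i, T ∩ P i ⊆ {t} := by
  by_contra! h
  have herase : IsTransversal P (T.erase t) := fun i ↦ by
    obtain ⟨x, hx, hxt⟩ := not_subset.1 (h i)
    rw [mem_inter] at hx
    exact ⟨x, mem_inter.2 ⟨mem_erase.2 ⟨mem_singleton.not.1 hxt, hx.1⟩, hx.2⟩⟩
  exact erase_eq_self.1 (hT.eq_of_le herase (erase_subset t T)) ht

lemma Minimal.exists_image_eq [Fintype ι] (hT : Minimal (IsTransversal P) T) :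
    ∃ f : ι → α, (∀ i, f i ∈ P i) ∧ univ.image f = T := by
  choose f hf using hT.prop
  refine ⟨f, fun i ↦ (mem_inter.1 (hf i)).2, Subset.antisymm ?_ fun t ht ↦ ?_⟩
  · exact image_subset_iff.2 fun i _ ↦ (mem_inter.1 (hf i)).1
  · obtain ⟨i, hi⟩ := hT.exists_inter_subset_singleton ht
    exact mem_image.2 ⟨i, mem_univ i, mem_singleton.1 (hi (hf i))⟩

end Transversal

variable {n k : ℕ} {P : Fin k → Finset (Fin n)}

lemma IsIntersector.isTransversal {C : Finset (Fin n)} (hC : IsIntersector n k P C) :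
    IsTransversal P C := by
  obtain ⟨f, hf, rfl⟩ := hC
  exact fun i ↦ ⟨f i, mem_inter.2 ⟨mem_image_of_mem f (mem_univ i), hf i⟩⟩

lemma Minimal.isMinIntersector {T : Finset (Fin n)} (hT : Minimal (IsTransversal P) T) :
    IsMinIntersector n k P T :=
  ⟨hT.exists_image_eq, fun _ hC' hsub ↦ hT.eq_of_le hC'.isTransversal hsub⟩

lemma IsCCover.exists_isTransversal_inter_subset (hP : IsCCover n k P) {i₀ : Fin k} {p : Fin n}
    (hp : p ∈ P i₀) : ∃ T, IsTransversal P T ∧ T ∩ P i₀ ⊆ {p} := by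
  have hg : ∀ j, ∃ x ∈ P j, x ∈ P i₀ → x = p := fun j ↦ by
    by_cases hj : j = i₀
    · exact ⟨p, hj ▸ hp, fun _ ↦ rfl⟩
    · obtain ⟨x, hx⟩ := hP.2 j i₀ hj
      rw [mem_sdiff] at hx
      exact ⟨x, hx.1, fun h ↦ absurd h hx.2⟩
  choose g hgP hgp using hg
  refine ⟨univ.image g, fun j ↦ ⟨g j, mem_inter.2 ⟨mem_image_of_mem g (mem_univ j), hgP j⟩⟩, ?_⟩
  intro x hx
  obtain ⟨hxg, hxi₀⟩ := mem_inter.1 hx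
  obtain ⟨j, -, rfl⟩ := mem_image.1 hxg
  exact mem_singleton.2 (hgp j hxi₀)

lemma IsCCover.exists_isMinIntersector_mem (hP : IsCCover n k P) (p : Fin n) :
    ∃ C, IsMinIntersector n k P C ∧ p ∈ C := by
  obtain ⟨i₀, -, hp⟩ := mem_biUnion.1 (hP.1 ▸ mem_univ p)
  obtain ⟨T, hT, hTp⟩ := hP.exists_isTransversal_inter_subset hp
  obtain ⟨C, hCT, hC⟩ := exists_minimal_le_of_wellFoundedLT _ T hT
  obtain ⟨x, hx⟩ := hC.prop i₀
  have hxp : x = p := mem_singleton.1 (hTp (inter_subset_inter_right hCT hx))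
  exact ⟨C, hC.isMinIntersector, hxp ▸ (mem_inter.1 hx).1⟩

lemma IsMinIntersector.sdiff_nonempty {C C' : Finset (Fin n)} (hC : IsMinIntersector n k P C)
    (hC' : IsMinIntersector n k P C') (hne : C ≠ C') : (C \ C').Nonempty :=
  Finset.sdiff_nonempty.2 fun hsub ↦ hne (hC'.2 C hC.1 hsub)

theorem min_intersectors_constructive_cover_general (n k : ℕ)
    (P : Fin k → Finset (Fin n)) (hP : IsCCover n k P) :
    (∀ p : Fin n, ∃ C : Finset (Fin n), IsMinIntersector n k P C ∧ p ∈ C) ∧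
    (∀ C C' : Finset (Fin n), IsMinIntersector n k P C → IsMinIntersector n k P C' →
      C ≠ C' → (C \ C').Nonempty) :=
  ⟨hP.exists_isMinIntersector_mem, fun _ _ hC hC' hne ↦ hC.sdiff_nonempty hC' hne⟩

/-- The collection of minimal intersectors of a constructive ordered `k`-cover forms
a constructive unordered cover of `Fin n`: its union is all of `Fin n` and no two
distinct members are subsets of each other. -/
theorem min_intersectors_constructive_cover (n k : ℕ) (hn : 1 ≤ n) (hk : 1 ≤ k)
    (P : Fin k → Finset (Fin n)) (hP : IsCCover n k P) :
    (∀ p : Fin n, ∃ C : Finset (Fin n), IsMinIntersector n k P C ∧ p ∈ C) ∧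
    (∀ C C' : Finset (Fin n), IsMinIntersector n k P C → IsMinIntersector n k P C' →
      C ≠ C' → (C \ C').Nonempty) :=
  min_intersectors_constructive_cover_general n k P hP
end
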